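/- arXiv:2212.09186 — 2 statements merged into one kernel-verified Lean document; each statement's English description precedes it below -/
import Mathlib

section
/- Let X be a uniformly convex real Banach space, Y a real Banach space whose dual Y* is uniformly convex (equivalently, Y is uniformly smooth), and θ : S_X × S_{Y*} → ℝ a nonzero function which is uniformly continuous and satisfies θ(−x,y*) = θ(x,−y*) = −θ(x,y*) for all (x,y*) ∈ S_X × S_{Y*}. Let s > 0 be such that θ⁻¹([s,∞)) is nonempty. Then every nonempty closed symmetric subset L of θ⁻¹([s,∞)) has property (P); in particular θ⁻¹([s,∞)) itself has property (P), and θ⁻¹({s}) has property (P) whenever it is nonempty. -/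
/-!
Fix `p ∈ L`, a functional `x*` norming `p.1` and a vector `y` almost norming `p.2`.
If `q ∈ L` is `ε`-far from `±p`, then either `q.1` is `ε/2`-far from both `p.1` and `-p.1`, or
`q.2` is `ε/2`-far from both `p.2` and `-p.2`: the two mixed alternatives would put `q` close to
`(-p.1, p.2)` or `(p.1, -p.2)`, where `θ ≤ -s`, contradicting `θ q ≥ s` by uniform continuity.
In either case uniform convexity of the relevant factor yields a gap, uniform in `p` and `q`.
-/

open Filter Topology Set

noncomputable section

variable {X Y : Type*}
  [NormedAddCommGroup X] [NormedSpace ℝ X]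
  [NormedAddCommGroup Y] [NormedSpace ℝ Y]

/-- The Hausdorff distance between the symmetric pairs `Γ p = {p, -p}` and `Γ q = {q, -q}`
in `X × Y*` with the sum norm. -/
def dHG (p q : X × (Y →L[ℝ] ℝ)) : ℝ :=
  min (‖p.1 - q.1‖ + ‖p.2 - q.2‖) (‖p.1 + q.1‖ + ‖p.2 + q.2‖)

/-- Property (P) for a subset `L ⊆ S_X × S_{Y*}`. -/
def PropP (L : Set (X × (Y →L[ℝ] ℝ))) : Prop :=
  ∃ ε₀ > (0 : ℝ), ∀ ε : ℝ, 0 < ε → ε < ε₀ → ∃ ϖ > (0 : ℝ), ∀ p ∈ L,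
    ∃ (xs : X →L[ℝ] ℝ) (ye : Y), ‖xs‖ ≤ 1 ∧ ‖ye‖ ≤ 1 ∧
      ∀ q ∈ L, ε ≤ dHG p q → |xs q.1| + |q.2 ye| ≤ xs p.1 + p.2 ye - ϖ

theorem ContinuousLinearMap.exists_norm_le_one_lt_apply {E : Type*} [NormedAddCommGroup E]
    [NormedSpace ℝ E] (f : E →L[ℝ] ℝ) {r : ℝ} (hr : r < ‖f‖) :
    ∃ y : E, ‖y‖ ≤ 1 ∧ r < f y := by
  obtain ⟨y, hy, hfy⟩ := f.exists_lt_apply_of_lt_opNorm hr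
  rcases lt_abs.1 hfy with h | h
  · exact ⟨y, hy.le, h⟩
  · exact ⟨-y, by simpa using hy.le, by simpa using h⟩

theorem UniformConvexSpace.exists_forall_apply_add_abs_apply_le_two_sub {E : Type*}
    [NormedAddCommGroup E] [NormedSpace ℝ E] [UniformConvexSpace E] {ε : ℝ} (hε : 0 < ε) :
    ∃ δ > 0, ∀ φ : E →L[ℝ] ℝ, ‖φ‖ ≤ 1 → ∀ ⦃x z : E⦄, ‖x‖ = 1 → ‖z‖ = 1 →
      ε ≤ ‖x - z‖ → ε ≤ ‖x + z‖ → φ x + |φ z| ≤ 2 - δ := by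
  obtain ⟨δ, hδ, huc⟩ := exists_forall_sphere_dist_add_le_two_sub E hε
  refine ⟨δ, hδ, fun φ hφ x z hx hz hsub hadd => ?_⟩
  have hφle : ∀ v, φ v ≤ ‖v‖ := fun v =>
    (le_abs_self _).trans (φ.le_of_opNorm_le hφ v |>.trans_eq (one_mul _))
  have hplus : ‖x + z‖ ≤ 2 - δ := huc hx hz hsub
  have hminus : ‖x - z‖ ≤ 2 - δ := by
    simpa [sub_eq_add_neg] using huc hx (norm_neg z ▸ hz) (by simpa [sub_eq_add_neg] using hadd)
  have h₁ := hφle (x + z)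
  have h₂ := hφle (x - z)
  rw [map_add] at h₁
  rw [map_sub] at h₂
  rcases abs_cases (φ z) with ⟨h, -⟩ | ⟨h, -⟩ <;> linarith

theorem le_norm_add_norm_of_apply_nonpos {E F : Type*} [NormedAddCommGroup E]
    [NormedAddCommGroup F] {θ : E × F → ℝ} {s α : ℝ}
    (hα : ∀ p q : E × F, ‖p.1‖ = 1 → ‖p.2‖ = 1 → ‖q.1‖ = 1 → ‖q.2‖ = 1 →
      ‖p.1 - q.1‖ + ‖p.2 - q.2‖ < α → |θ p - θ q| < s)
    {u q : E × F} (hu₁ : ‖u.1‖ = 1) (hu₂ : ‖u.2‖ = 1) (hq₁ : ‖q.1‖ = 1)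
    (hq₂ : ‖q.2‖ = 1) (hθu : θ u ≤ 0) (hθq : s ≤ θ q) :
    α ≤ ‖u.1 - q.1‖ + ‖u.2 - q.2‖ := by
  by_contra! h
  have := hα u q hu₁ hu₂ hq₁ hq₂ h
  rw [abs_sub_comm, abs_lt] at this
  linarith [this.2]

theorem le_norm_add_norm_of_odd {E F : Type*} [NormedAddCommGroup E]
    [NormedAddCommGroup F] {θ : E × F → ℝ} {s α : ℝ}
    (hα : ∀ p q : E × F, ‖p.1‖ = 1 → ‖p.2‖ = 1 → ‖q.1‖ = 1 → ‖q.2‖ = 1 →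
      ‖p.1 - q.1‖ + ‖p.2 - q.2‖ < α → |θ p - θ q| < s)
    (hθodd : ∀ p : E × F, ‖p.1‖ = 1 → ‖p.2‖ = 1 → θ (-p.1, p.2) = -θ p ∧ θ (p.1, -p.2) = -θ p)
    (hs : 0 ≤ s) {p q : E × F} (hp₁ : ‖p.1‖ = 1) (hp₂ : ‖p.2‖ = 1) (hθp : s ≤ θ p)
    (hq₁ : ‖q.1‖ = 1) (hq₂ : ‖q.2‖ = 1) (hθq : s ≤ θ q) :
    α ≤ ‖p.1 + q.1‖ + ‖p.2 - q.2‖ ∧ α ≤ ‖p.1 - q.1‖ + ‖p.2 + q.2‖ := by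
  have h₁ := le_norm_add_norm_of_apply_nonpos hα (u := (-p.1, p.2)) (by simpa) hp₂ hq₁ hq₂
    (by rw [(hθodd p hp₁ hp₂).1]; linarith) hθq
  have h₂ := le_norm_add_norm_of_apply_nonpos hα (u := (p.1, -p.2)) hp₁ (by simpa) hq₁ hq₂
    (by rw [(hθodd p hp₁ hp₂).2]; linarith) hθq
  rw [← norm_neg (p.1 + q.1), ← norm_neg (p.2 + q.2), neg_add', neg_add']
  exact ⟨h₁, h₂⟩

theorem and_or_and_of_add_ge {a b c d ε : ℝ} (hac : ε ≤ a + c) (hbd : ε ≤ b + d)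
    (hbc : ε ≤ b + c) (had : ε ≤ a + d) :
    (ε / 2 ≤ a ∧ ε / 2 ≤ b) ∨ (ε / 2 ≤ c ∧ ε / 2 ≤ d) := by
  by_contra! h
  rcases le_or_gt (ε / 2) a with ha | ha
  · have hb := h.1 ha
    linarith [h.2 (by linarith)]
  · linarith [h.2 (by linarith)]

theorem propP_of_subset_superlevelSet
    [UniformConvexSpace X] [UniformConvexSpace (Y →L[ℝ] ℝ)]
    (θ : X × (Y →L[ℝ] ℝ) → ℝ)
    (hθuc : ∀ r : ℝ, 0 < r → ∃ α > (0 : ℝ), ∀ p q : X × (Y →L[ℝ] ℝ),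
      ‖p.1‖ = 1 → ‖p.2‖ = 1 → ‖q.1‖ = 1 → ‖q.2‖ = 1 →
      ‖p.1 - q.1‖ + ‖p.2 - q.2‖ < α → |θ p - θ q| < r)
    (hθodd : ∀ p : X × (Y →L[ℝ] ℝ), ‖p.1‖ = 1 → ‖p.2‖ = 1 →
      θ (-p.1, p.2) = -θ p ∧ θ (p.1, -p.2) = -θ p)
    {s : ℝ} (hs : 0 < s) {L : Set (X × (Y →L[ℝ] ℝ))}
    (hL : L ⊆ {p : X × (Y →L[ℝ] ℝ) | ‖p.1‖ = 1 ∧ ‖p.2‖ = 1 ∧ s ≤ θ p}) :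
    PropP L := by
  obtain ⟨α, hα, hαθ⟩ := hθuc s hs
  refine ⟨α, hα, fun ε hε hεα => ?_⟩
  obtain ⟨δX, hδX, hX⟩ :=
    UniformConvexSpace.exists_forall_apply_add_abs_apply_le_two_sub (E := X) (half_pos hε)
  obtain ⟨δY, hδY, hY⟩ := UniformConvexSpace.exists_forall_apply_add_abs_apply_le_two_sub
    (E := Y →L[ℝ] ℝ) (half_pos hε)
  set δ := min δX δY
  refine ⟨δ / 4, by positivity, fun p hp => ?_⟩
  obtain ⟨hp₁, hp₂, hθp⟩ := hL hp
  obtain ⟨xs, hxs, hxsp⟩ := exists_dual_vector ℝ p.1 (by simp [hp₁])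
  replace hxsp : xs p.1 = 1 := by simpa [hp₁] using hxsp
  obtain ⟨ye, hye, hpye⟩ := p.2.exists_norm_le_one_lt_apply (r := 1 - δ / 4)
    (by rw [hp₂]; linarith [show 0 < δ by positivity])
  have hev : ‖NormedSpace.inclusionInDoubleDual ℝ Y ye‖ ≤ 1 :=
    (NormedSpace.double_dual_bound ℝ Y ye).trans hye
  refine ⟨xs, ye, hxs.le, hye, fun q hq hdist => ?_⟩
  obtain ⟨hq₁, hq₂, hθq⟩ := hL hq
  rw [hxsp]
  have hxsq : |xs q.1| ≤ 1 := by simpa [hxs] using xs.unit_le_opNorm q.1 hq₁.le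
  have hqye : |q.2 ye| ≤ 1 := by simpa [hq₂] using q.2.unit_le_opNorm ye hye
  obtain ⟨hfar₁, hfar₂⟩ :=
    le_norm_add_norm_of_odd hαθ hθodd hs.le hp₁ hp₂ hθp hq₁ hq₂ hθq
  rcases and_or_and_of_add_ge (le_trans hdist (min_le_left _ _))
    (le_trans hdist (min_le_right _ _)) (by linarith) (by linarith) with ⟨h₁, h₂⟩ | ⟨h₁, h₂⟩
  · have := hX xs hxs.le hp₁ hq₁ h₁ h₂
    rw [hxsp] at this
    linarith [show δ ≤ δX from min_le_left _ _]
  · have := hY _ hev hp₂ hq₂ h₁ h₂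
    simp only [NormedSpace.dual_def] at this
    linarith [show δ ≤ δY from min_le_right _ _]

theorem statement9_general
    [UniformConvexSpace X] [UniformConvexSpace (Y →L[ℝ] ℝ)]
    (θ : X × (Y →L[ℝ] ℝ) → ℝ)
    (hθuc : ∀ r : ℝ, 0 < r → ∃ α > (0 : ℝ), ∀ p q : X × (Y →L[ℝ] ℝ),
      ‖p.1‖ = 1 → ‖p.2‖ = 1 → ‖q.1‖ = 1 → ‖q.2‖ = 1 →
      ‖p.1 - q.1‖ + ‖p.2 - q.2‖ < α → |θ p - θ q| < r)
    (hθodd : ∀ p : X × (Y →L[ℝ] ℝ), ‖p.1‖ = 1 → ‖p.2‖ = 1 →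
      θ (-p.1, p.2) = -θ p ∧ θ (p.1, -p.2) = -θ p)
    (s : ℝ) (hs : 0 < s) :
    (∀ L : Set (X × (Y →L[ℝ] ℝ)), L.Nonempty → IsClosed L → (∀ p ∈ L, -p ∈ L) →
      L ⊆ {p : X × (Y →L[ℝ] ℝ) | ‖p.1‖ = 1 ∧ ‖p.2‖ = 1 ∧ s ≤ θ p} → PropP L) ∧
    PropP {p : X × (Y →L[ℝ] ℝ) | ‖p.1‖ = 1 ∧ ‖p.2‖ = 1 ∧ s ≤ θ p} ∧
    ({p : X × (Y →L[ℝ] ℝ) | ‖p.1‖ = 1 ∧ ‖p.2‖ = 1 ∧ θ p = s}.Nonempty →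
      PropP {p : X × (Y →L[ℝ] ℝ) | ‖p.1‖ = 1 ∧ ‖p.2‖ = 1 ∧ θ p = s}) :=
  ⟨fun _ _ _ _ hL => propP_of_subset_superlevelSet θ hθuc hθodd hs hL,
    propP_of_subset_superlevelSet θ hθuc hθodd hs subset_rfl,
    fun _ => propP_of_subset_superlevelSet θ hθuc hθodd hs
      fun _ ⟨h₁, h₂, h₃⟩ => ⟨h₁, h₂, h₃.ge⟩⟩

theorem statement9
    [CompleteSpace X] [CompleteSpace Y]
    [UniformConvexSpace X] [UniformConvexSpace (Y →L[ℝ] ℝ)]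
    (θ : X × (Y →L[ℝ] ℝ) → ℝ)
    (hθnz : ∃ p : X × (Y →L[ℝ] ℝ), ‖p.1‖ = 1 ∧ ‖p.2‖ = 1 ∧ θ p ≠ 0)
    (hθuc : ∀ r : ℝ, 0 < r → ∃ α > (0 : ℝ), ∀ p q : X × (Y →L[ℝ] ℝ),
      ‖p.1‖ = 1 → ‖p.2‖ = 1 → ‖q.1‖ = 1 → ‖q.2‖ = 1 →
      ‖p.1 - q.1‖ + ‖p.2 - q.2‖ < α → |θ p - θ q| < r)
    (hθodd : ∀ p : X × (Y →L[ℝ] ℝ), ‖p.1‖ = 1 → ‖p.2‖ = 1 →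
      θ (-p.1, p.2) = -θ p ∧ θ (p.1, -p.2) = -θ p)
    (s : ℝ) (hs : 0 < s)
    (hpre : {p : X × (Y →L[ℝ] ℝ) | ‖p.1‖ = 1 ∧ ‖p.2‖ = 1 ∧ s ≤ θ p}.Nonempty) :
    (∀ L : Set (X × (Y →L[ℝ] ℝ)), L.Nonempty → IsClosed L → (∀ p ∈ L, -p ∈ L) →
      L ⊆ {p : X × (Y →L[ℝ] ℝ) | ‖p.1‖ = 1 ∧ ‖p.2‖ = 1 ∧ s ≤ θ p} → PropP L) ∧
    PropP {p : X × (Y →L[ℝ] ℝ) | ‖p.1‖ = 1 ∧ ‖p.2‖ = 1 ∧ s ≤ θ p} ∧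
    ({p : X × (Y →L[ℝ] ℝ) | ‖p.1‖ = 1 ∧ ‖p.2‖ = 1 ∧ θ p = s}.Nonempty →
      PropP {p : X × (Y →L[ℝ] ℝ) | ‖p.1‖ = 1 ∧ ‖p.2‖ = 1 ∧ θ p = s}) :=
  statement9_general θ hθuc hθodd s hs
end
end

section
/- Let X, Y, W be real Banach spaces, let L be a nonempty symmetric closed subset of S_X × S_{Y*} having property (P), and let (Z, ‖·‖_Z) be a Banach space which is a linear subspace of C_{b,e}(L, W) such that (i) ‖Φ‖_Z ≥ ‖Φ‖_∞ for all Φ ∈ Z, and (ii) Z contains every map [T]⊕w : (x,y*) ↦ y*(T(x))·w with T : X → Y finite-rank bounded linear and w ∈ W, with ‖[T]⊕w‖_Z ≤ ‖T‖·‖w‖. Then the following weak* uniform separation property holds: there exists ε₀ > 0 such that for every ε ∈ (0, ε₀) there is ϖ'(ε) > 0 so that for every (x,y*) ∈ L and every w* in the unit sphere of W* there exists Φ ∈ Z with ‖Φ‖_Z ≤ 1 such that for all (z,t*) ∈ L and all v* in the unit sphere of W*, min(‖x−z‖+‖y*−t*‖, ‖x+z‖+‖y*+t*‖) ≥ ε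 implies w*(Φ(x,y*)) − ϖ'(ε) ≥ v*(Φ(z,t*)). -/
/-!
Fix `(x, y*) ∈ L` and let `(x*_ε, y_ε)` be given by property (P). Mix them with a functional
`x₀*` norming `x` and a vector `y₀` almost norming `y*` into the rank-two operator
`T = ½ (x₀* ⊗ y_ε + x*_ε ⊗ y₀)`. On the unit balls `|t*(T z)| ≤ ½ (|x*_ε z| + |t* y_ε|)`,
while `y*(T x) ≈ ½ (x*_ε x + y* y_ε)`, so (P) survives for the pairing `(z, t*) ↦ t*(T z)`
with half the gap. Then `Φ = [T] ⊕ w`, with `w` almost norming `w*`, separates as required.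
-/

open Filter Topology Set

noncomputable section

variable {X Y W : Type*}
  [NormedAddCommGroup X] [NormedSpace ℝ X]
  [NormedAddCommGroup Y] [NormedSpace ℝ Y]
  [NormedAddCommGroup W] [NormedSpace ℝ W]

/-- The sup norm `‖Φ‖_∞` of a function over `L`. -/
def supNormOn (L : Set (X × (Y →L[ℝ] ℝ))) (Φ : X × (Y →L[ℝ] ℝ) → W) : ℝ :=
  sSup ((fun p => ‖Φ p‖) '' L)

/-- Membership in `C_{b,e}(L, W)`: bounded, continuous (on `L`) and even. -/
def IsCbe (L : Set (X × (Y →L[ℝ] ℝ))) (Φ : X × (Y →L[ℝ] ℝ) → W) : Prop :=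
  ContinuousOn Φ L ∧ BddAbove ((fun p => ‖Φ p‖) '' L) ∧ ∀ p ∈ L, Φ (-p) = Φ p

/-- `Φ` attains `d_H`-strongly its maximum on `L`. -/
def AttainsDHStrongly (L : Set (X × (Y →L[ℝ] ℝ))) (Φ : X × (Y →L[ℝ] ℝ) → W) : Prop :=
  ∃ p₀ ∈ L, ‖Φ p₀‖ = supNormOn L Φ ∧
    ∀ u : ℕ → X × (Y →L[ℝ] ℝ), (∀ n, u n ∈ L) →
      Tendsto (fun n => ‖Φ (u n)‖) atTop (𝓝 (supNormOn L Φ)) →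
      Tendsto (fun n => dHG (u n) p₀) atTop (𝓝 0)

/-- A finite-rank continuous linear operator. -/
def FinRank (T : X →L[ℝ] Y) : Prop :=
  FiniteDimensional ℝ ↥(LinearMap.range T.toLinearMap)

/-- A porous subset of a (pseudo)metric space. -/
def IsPorous {M : Type*} [PseudoMetricSpace M] (A : Set M) : Prop :=
  ∃ lam : ℝ, 0 < lam ∧ lam ≤ 1 ∧ ∃ r₀ > (0 : ℝ), ∀ x : M, ∀ r : ℝ, 0 < r → r ≤ r₀ →
    ∃ y : M, Metric.ball y (lam * r) ⊆ Metric.ball x r ∩ Aᶜ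

/-- A σ-porous subset of a (pseudo)metric space. -/
def IsSigmaPorous {M : Type*} [PseudoMetricSpace M] (A : Set M) : Prop :=
  ∃ f : ℕ → Set M, (∀ n, IsPorous (f n)) ∧ A = ⋃ n, f n

theorem sub_le_mul_of_abs_le_one {c σ η : ℝ} (hc : |c| ≤ 1) (hσ : 1 - η ≤ σ) (hσ₁ : σ ≤ 1) :
    c - η ≤ c * σ := by
  have h := abs_le.mp hc
  nlinarith [mul_nonneg (by linarith : 0 ≤ 1 + c) (by linarith : 0 ≤ 1 - σ)]

theorem abs_mul_add_mul_le {a b c d : ℝ} (ha : |a| ≤ 1) (hd : |d| ≤ 1) :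
    |a * b + c * d| ≤ |b| + |c| :=
  calc |a * b + c * d| ≤ |a| * |b| + |c| * |d| := by
        simpa only [abs_mul] using abs_add_le (a * b) (c * d)
    _ ≤ 1 * |b| + |c| * 1 := by gcongr
    _ = |b| + |c| := by ring

theorem mul_le_abs_of_abs_le_one {d σ : ℝ} (hσ : |σ| ≤ 1) : d * σ ≤ |d| :=
  calc d * σ ≤ |d| * |σ| := (le_abs_self _).trans (abs_mul d σ).le
    _ ≤ |d| := mul_le_of_le_one_right (abs_nonneg d) hσ

theorem ContinuousLinearMap.abs_apply_le_one {E : Type*} [NormedAddCommGroup E]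
    [NormedSpace ℝ E] {f : E →L[ℝ] ℝ} {x : E} (hf : ‖f‖ ≤ 1) (hx : ‖x‖ ≤ 1) : |f x| ≤ 1 := by
  simpa using f.le_of_opNorm_le_of_le hf hx

theorem ContinuousLinearMap.exists_norm_le_one_sub_le_apply {E : Type*} [NormedAddCommGroup E]
    [NormedSpace ℝ E] (f : E →L[ℝ] ℝ) {η : ℝ} (hη : 0 < η) :
    ∃ y : E, ‖y‖ ≤ 1 ∧ ‖f‖ - η ≤ f y := by
  obtain ⟨x, hx, hfx⟩ := f.exists_lt_apply_of_lt_opNorm (sub_lt_self ‖f‖ hη)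
  rw [Real.norm_eq_abs] at hfx
  rcases le_abs'.mp hfx.le with h | h
  · exact ⟨-x, by simpa using hx.le, by rw [map_neg]; linarith⟩
  · exact ⟨x, hx.le, h⟩

namespace FinRank

theorem add {S T : X →L[ℝ] Y} (hS : FinRank S) (hT : FinRank T) : FinRank (S + T) :=
  haveI : FiniteDimensional ℝ (LinearMap.range S.toLinearMap) := hS
  haveI : FiniteDimensional ℝ (LinearMap.range T.toLinearMap) := hT
  Submodule.finiteDimensional_of_le (LinearMap.range_add_le S.toLinearMap T.toLinearMap)

theorem smul (c : ℝ) {T : X →L[ℝ] Y} (hT : FinRank T) : FinRank (c • T) :=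
  haveI : FiniteDimensional ℝ (LinearMap.range T.toLinearMap) := hT
  Submodule.finiteDimensional_of_le (LinearMap.range_smul_le_range T.toLinearMap c)

theorem smulRight (f : X →L[ℝ] ℝ) (y : Y) : FinRank (f.smulRight y) :=
  Submodule.finiteDimensional_of_le (S₂ := ℝ ∙ y) <| by
    rintro _ ⟨x, rfl⟩
    exact Submodule.mem_span_singleton.2 ⟨f x, rfl⟩

end FinRank

theorem exists_finRank_norm_le_one_peaking (x : X) (hx : ‖x‖ = 1) (y' : Y →L[ℝ] ℝ)
    (hy' : ‖y'‖ = 1) {xs : X →L[ℝ] ℝ} (hxs : ‖xs‖ ≤ 1) {ye : Y} (hye : ‖ye‖ ≤ 1)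
    {η : ℝ} (hη : 0 < η) :
    ∃ T : X →L[ℝ] Y, FinRank T ∧ ‖T‖ ≤ 1 ∧ (xs x + y' ye - η) / 2 ≤ y' (T x) ∧
      ∀ (z : X) (t : Y →L[ℝ] ℝ), ‖z‖ ≤ 1 → ‖t‖ ≤ 1 → |t (T z)| ≤ (|xs z| + |t ye|) / 2 := by
  obtain ⟨x₀, hx₀, hx₀x⟩ := exists_dual_vector ℝ x (by simp [hx])
  obtain ⟨y₀, hy₀, hy'y₀⟩ := y'.exists_norm_le_one_sub_le_apply hη
  have hT : ∀ (z : X) (t : Y →L[ℝ] ℝ),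
      t (((2⁻¹ : ℝ) • (x₀.smulRight ye + xs.smulRight y₀)) z) =
        (x₀ z * t ye + xs z * t y₀) / 2 := by
    intro z t
    simp only [smul_apply, add_apply,
      ContinuousLinearMap.smulRight_apply, map_smul, map_add, smul_eq_mul]
    ring
  refine ⟨(2⁻¹ : ℝ) • (x₀.smulRight ye + xs.smulRight y₀),
    ((FinRank.smulRight _ _).add (FinRank.smulRight _ _)).smul _, ?_, ?_, ?_⟩
  · calc ‖(2⁻¹ : ℝ) • (x₀.smulRight ye + xs.smulRight y₀)‖
        ≤ 2⁻¹ * (‖x₀‖ * ‖ye‖ + ‖xs‖ * ‖y₀‖) := by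
          rw [norm_smul, Real.norm_of_nonneg (by norm_num),
            ← ContinuousLinearMap.norm_smulRight_apply x₀ ye,
            ← ContinuousLinearMap.norm_smulRight_apply xs y₀]
          gcongr
          exact norm_add_le _ _
      _ ≤ 2⁻¹ * (1 * 1 + 1 * 1) := by gcongr; exact hx₀.le
      _ = 1 := by norm_num
  · have hxsx : |xs x| ≤ 1 := xs.abs_apply_le_one hxs hx.le
    have hy'y₀₁ : y' y₀ ≤ 1 := (le_abs_self _).trans (y'.abs_apply_le_one hy'.le hy₀)
    have := sub_le_mul_of_abs_le_one hxsx (by rwa [hy'] at hy'y₀) hy'y₀₁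
    rw [hT, hx₀x, hx, RCLike.ofReal_one]
    linarith
  · intro z t hz ht
    rw [hT, abs_div, abs_two, add_comm |xs z|]
    gcongr
    exact abs_mul_add_mul_le (x₀.abs_apply_le_one hx₀.le hz) (t.abs_apply_le_one ht hy₀)

theorem statement12_general
    (L : Set (X × (Y →L[ℝ] ℝ)))
    (hLsphere : ∀ p ∈ L, ‖p.1‖ = 1 ∧ ‖p.2‖ = 1)
    (hP : PropP L)
    {Z : Type*} [NormedAddCommGroup Z] [NormedSpace ℝ Z]
    (j : Z →ₗ[ℝ] (X × (Y →L[ℝ] ℝ)) → W)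
    (hjcontains : ∀ T : X →L[ℝ] Y, FinRank T → ∀ w : W,
      ∃ Φ : Z, (∀ p ∈ L, j Φ p = (p.2 (T p.1)) • w) ∧ ‖Φ‖ ≤ ‖T‖ * ‖w‖) :
    ∃ ε₀ > (0 : ℝ), ∀ ε : ℝ, 0 < ε → ε < ε₀ → ∃ ϖ > (0 : ℝ),
      ∀ p ∈ L, ∀ ws : W →L[ℝ] ℝ, ‖ws‖ = 1 →
        ∃ Φ : Z, ‖Φ‖ ≤ 1 ∧ ∀ q ∈ L, ∀ vs : W →L[ℝ] ℝ, ‖vs‖ = 1 →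
          ε ≤ dHG p q → vs (j Φ q) ≤ ws (j Φ p) - ϖ := by
  obtain ⟨ε₀, hε₀, hP⟩ := hP
  refine ⟨ε₀, hε₀, fun ε hε hεε₀ => ?_⟩
  obtain ⟨ϖ, hϖ, hP⟩ := hP ε hε hεε₀
  refine ⟨ϖ / 4, by positivity, fun p hp ws hws => ?_⟩
  obtain ⟨xs, ye, hxs, hye, hsep⟩ := hP p hp
  obtain ⟨hp₁, hp₂⟩ := hLsphere p hp
  obtain ⟨T, hTfin, hT, hTp, hTq⟩ :=
    exists_finRank_norm_le_one_peaking p.1 hp₁ p.2 hp₂ hxs hye (η := ϖ / 6) (by positivity)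
  obtain ⟨w, hw, hwsw⟩ := ws.exists_norm_le_one_sub_le_apply (η := ϖ / 6) (by positivity)
  rw [hws] at hwsw
  obtain ⟨Φ, hΦ, hΦnorm⟩ := hjcontains T hTfin w
  refine ⟨Φ, hΦnorm.trans (mul_le_one₀ hT (norm_nonneg w) hw), fun q hq vs hvs hfar => ?_⟩
  obtain ⟨hq₁, hq₂⟩ := hLsphere q hq
  have hTp₁ : |p.2 (T p.1)| ≤ 1 :=
    p.2.abs_apply_le_one hp₂.le ((T.le_of_opNorm_le_of_le hT hp₁.le).trans_eq (one_mul 1))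
  have hwsw₁ : ws w ≤ 1 := (le_abs_self _).trans (ws.abs_apply_le_one hws.le hw)
  rw [hΦ q hq, hΦ p hp, map_smul, map_smul, smul_eq_mul, smul_eq_mul]
  calc q.2 (T q.1) * vs w
      ≤ |q.2 (T q.1)| := mul_le_abs_of_abs_le_one (vs.abs_apply_le_one hvs.le hw)
    _ ≤ (|xs q.1| + |q.2 ye|) / 2 := hTq q.1 q.2 hq₁.le hq₂.le
    _ ≤ (xs p.1 + p.2 ye - ϖ) / 2 := by linarith [hsep q hq hfar]
    _ ≤ p.2 (T p.1) - ϖ / 6 - ϖ / 4 := by linarith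
    _ ≤ p.2 (T p.1) * ws w - ϖ / 4 := by linarith [sub_le_mul_of_abs_le_one hTp₁ hwsw hwsw₁]

theorem statement12
    [CompleteSpace X] [CompleteSpace Y] [CompleteSpace W]
    (L : Set (X × (Y →L[ℝ] ℝ))) (hLne : L.Nonempty)
    (hLsphere : ∀ p ∈ L, ‖p.1‖ = 1 ∧ ‖p.2‖ = 1)
    (hLsym : ∀ p ∈ L, -p ∈ L) (hLclosed : IsClosed L)
    (hP : PropP L)
    {Z : Type*} [NormedAddCommGroup Z] [NormedSpace ℝ Z] [CompleteSpace Z]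
    (j : Z →ₗ[ℝ] (X × (Y →L[ℝ] ℝ)) → W)
    (hjinj : Function.Injective j)
    (hjmem : ∀ Φ : Z, IsCbe L (j Φ))
    (hjnorm : ∀ Φ : Z, supNormOn L (j Φ) ≤ ‖Φ‖)
    (hjcontains : ∀ T : X →L[ℝ] Y, FinRank T → ∀ w : W,
      ∃ Φ : Z, (∀ p ∈ L, j Φ p = (p.2 (T p.1)) • w) ∧ ‖Φ‖ ≤ ‖T‖ * ‖w‖) :
    ∃ ε₀ > (0 : ℝ), ∀ ε : ℝ, 0 < ε → ε < ε₀ → ∃ ϖ > (0 : ℝ),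
      ∀ p ∈ L, ∀ ws : W →L[ℝ] ℝ, ‖ws‖ = 1 →
        ∃ Φ : Z, ‖Φ‖ ≤ 1 ∧ ∀ q ∈ L, ∀ vs : W →L[ℝ] ℝ, ‖vs‖ = 1 →
          ε ≤ dHG p q → vs (j Φ q) ≤ ws (j Φ p) - ϖ :=
  statement12_general L hLsphere hP j hjcontains

end
end
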